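/- arXiv:1705.00488 — 8 statements merged into one kernel-verified Lean document; each statement's English description precedes it below -/
import Mathlib

section
/- Let $I$ and $J$ be monomial ideals in the polynomial ring $R = K[x_1, \ldots, x_n]$ over a field $K$. Then $I \cap J = I \cdot J$ if and only if the supports of the minimal monomial generating sets $G(I)$ and $G(J)$ are disjoint, i.e., no variable $x_i$ divides both a minimal generator of $I$ and a minimal generator of $J$. -/
open MvPolynomial Pointwise

/-- Key combinatorial lemma: if for every pair of generators, the pointwise sup
dominates a sum of generators, then all supports are disjoint. -/
lemma combo_disjoint {n : ℕ} (A B : Finset (Fin n →₀ ℕ))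
    (hA : ∀ a ∈ A, ∀ a' ∈ A, a ≤ a' → a = a')
    (hB : ∀ b ∈ B, ∀ b' ∈ B, b ≤ b' → b = b')
    (h : ∀ a ∈ A, ∀ b ∈ B, ∃ a' ∈ A, ∃ b' ∈ B, a' + b' ≤ a ⊔ b) :
    ∀ a ∈ A, ∀ b ∈ B, Disjoint a.support b.support := by
  have key : ∀ N : ℕ, ∀ a ∈ A, ∀ b ∈ B, (∑ j, (a ⊔ b) j) < N →
      Disjoint a.support b.support := by
    intro N
    induction N with
    | zero => intro a _ b _ hN; exact absurd hN (Nat.not_lt_zero _)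
    | succ N ih =>
      intro a ha b hb hN
      rw [Finset.disjoint_left]
      by_contra hcon
      push_neg at hcon
      obtain ⟨i, hia, hib⟩ := hcon
      have hai : 1 ≤ a i := Nat.one_le_iff_ne_zero.mpr (Finsupp.mem_support_iff.mp hia)
      have hbi : 1 ≤ b i := Nat.one_le_iff_ne_zero.mpr (Finsupp.mem_support_iff.mp hib)
      obtain ⟨a', ha', b', hb', hle⟩ := h a ha b hb
      have hle' : ∀ j, a' j + b' j ≤ max (a j) (b j) := by
        intro j
        have := Finsupp.le_def.mp hle j
        simpa [Finsupp.add_apply, Finsupp.sup_apply] using this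
      by_cases haa : a' ≤ a
      · -- then a' = a, and then b' ≤ b so b' = b, contradiction at i
        have haa' : a' = a := hA a' ha' a ha haa
        subst haa'
        have hbb : b' ≤ b := by
          apply Finsupp.le_def.mpr
          intro j
          have := hle' j
          rcases max_choice (a' j) (b j) with h' | h' <;> omega
        have hbb' : b' = b := hB b' hb' b hb hbb
        subst hbb'
        have := hle' i
        rcases max_choice (a' i) (b' i) with h' | h' <;> omega
      · by_cases hbb : b' ≤ b
        · -- then b' = b, and then a' ≤ a, contradiction
          have hbb' : b' = b := hB b' hb' b hb hbb
          subst hbb'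
          apply haa
          apply Finsupp.le_def.mpr
          intro j
          have := hle' j
          rcases max_choice (a j) (b' j) with h' | h' <;> omega
        · -- a' ≰ a and b' ≰ b : find a smaller sharing pair (a', b)
          have hj : ∃ j, a j < a' j := by
            by_contra hc; push_neg at hc
            exact haa (Finsupp.le_def.mpr fun j => hc j)
          have hk : ∃ k, b k < b' k := by
            by_contra hc; push_neg at hc
            exact hbb (Finsupp.le_def.mpr fun k => hc k)
          obtain ⟨j, hj⟩ := hj
          obtain ⟨k, hk⟩ := hk
          -- a' and b share variable j
          have hshare : j ∈ a'.support ∧ j ∈ b.support := by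
            have := hle' j
            constructor <;> rw [Finsupp.mem_support_iff] <;>
              rcases max_choice (a j) (b j) with h' | h' <;> omega
          -- the sup decreases strictly
          have hlt : (∑ m, (a' ⊔ b) m) < ∑ m, (a ⊔ b) m := by
            apply Finset.sum_lt_sum
            · intro m _
              simp only [Finsupp.sup_apply]
              have := hle' m
              rcases max_choice (a m) (b m) with h' | h' <;>
                rcases max_choice (a' m) (b m) with h'' | h'' <;> omega
            · refine ⟨k, Finset.mem_univ k, ?_⟩
              simp only [Finsupp.sup_apply]
              have := hle' k
              rcases max_choice (a k) (b k) with h' | h' <;>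
                rcases max_choice (a' k) (b k) with h'' | h'' <;> omega
          have hdisj := ih a' ha' b hb (by omega)
          rw [Finset.disjoint_left] at hdisj
          exact hdisj hshare.1 hshare.2
  intro a ha b hb
  exact key (∑ j, (a ⊔ b) j + 1) a ha b hb (Nat.lt_succ_self _)

lemma span_monomial_mul {K : Type} [Field K] {n : ℕ} (A B : Finset (Fin n →₀ ℕ)) :
    Ideal.span ((fun s => (monomial s (1 : K))) '' (A : Set (Fin n →₀ ℕ))) *
      Ideal.span ((fun s => (monomial s (1 : K))) '' (B : Set (Fin n →₀ ℕ))) =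
    Ideal.span ((fun s => (monomial s (1 : K))) ''
      ((A : Set (Fin n →₀ ℕ)) + (B : Set (Fin n →₀ ℕ)))) := by
  rw [Ideal.span_mul_span']
  congr 1
  ext x
  constructor
  · rintro ⟨p, ⟨a, ha, rfl⟩, q, ⟨b, hb, rfl⟩, rfl⟩
    exact ⟨a + b, Set.add_mem_add ha hb, by simp [monomial_mul]⟩
  · rintro ⟨c, hc, rfl⟩
    obtain ⟨a, ha, b, hb, rfl⟩ := Set.mem_add.mp hc
    exact ⟨monomial a 1, ⟨a, ha, rfl⟩, monomial b 1, ⟨b, hb, rfl⟩,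
      by simp [monomial_mul]⟩

/-- For monomial ideals `I, J` in `K[x₁, …, xₙ]` with minimal monomial generating sets
`A`, `B` (minimality = the exponent vectors form an antichain under divisibility),
`I ∩ J = I·J` iff the supports of the minimal generators of `I` and `J` are disjoint. -/
theorem monomial_ideal_inf_eq_mul_iff_disjoint_supports {K : Type} [Field K] {n : ℕ}
    (A B : Finset (Fin n →₀ ℕ))
    (hA : ∀ a ∈ A, ∀ a' ∈ A, a ≤ a' → a = a')
    (hB : ∀ b ∈ B, ∀ b' ∈ B, b ≤ b' → b = b')
    (I J : Ideal (MvPolynomial (Fin n) K))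
    (hI : I = Ideal.span ((fun s => (monomial s (1 : K))) '' (A : Set (Fin n →₀ ℕ))))
    (hJ : J = Ideal.span ((fun s => (monomial s (1 : K))) '' (B : Set (Fin n →₀ ℕ)))) :
    I ⊓ J = I * J ↔ ∀ a ∈ A, ∀ b ∈ B, Disjoint a.support b.support := by
  subst hI hJ
  have hsupp_mono : ∀ c : Fin n →₀ ℕ, (monomial c (1 : K)).support = {c} := by
    classical
    intro c
    rw [support_monomial, if_neg one_ne_zero]
  constructor
  · intro heq
    apply combo_disjoint A B hA hB
    intro a ha b hb
    have hmem : monomial (a ⊔ b) (1 : K) ∈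
        Ideal.span ((fun s => (monomial s (1 : K))) '' (A : Set (Fin n →₀ ℕ))) ⊓
        Ideal.span ((fun s => (monomial s (1 : K))) '' (B : Set (Fin n →₀ ℕ))) := by
      rw [Submodule.mem_inf]
      constructor <;> rw [mem_ideal_span_monomial_image] <;> intro xi hxi <;>
        rw [hsupp_mono, Finset.mem_singleton] at hxi <;> subst hxi
      · exact ⟨a, ha, le_sup_left⟩
      · exact ⟨b, hb, le_sup_right⟩
    rw [heq, span_monomial_mul, mem_ideal_span_monomial_image] at hmem
    have := hmem (a ⊔ b) (by rw [hsupp_mono]; exact Finset.mem_singleton_self _)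
    obtain ⟨c, hc, hcle⟩ := this
    obtain ⟨a', ha', b', hb', rfl⟩ := Set.mem_add.mp hc
    exact ⟨a', ha', b', hb', hcle⟩
  · intro hdisj
    apply le_antisymm
    · intro f hf
      rw [Submodule.mem_inf] at hf
      obtain ⟨hfI, hfJ⟩ := hf
      rw [span_monomial_mul, mem_ideal_span_monomial_image]
      rw [mem_ideal_span_monomial_image] at hfI hfJ
      intro m hm
      obtain ⟨a, ha, hale⟩ := hfI m hm
      obtain ⟨b, hb, hble⟩ := hfJ m hm
      refine ⟨a + b, Set.add_mem_add ha hb, ?_⟩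
      apply Finsupp.le_def.mpr
      intro j
      have hd := hdisj a ha b hb
      rw [Finset.disjoint_left] at hd
      have h0 : a j = 0 ∨ b j = 0 := by
        by_contra hc; push_neg at hc
        exact hd (Finsupp.mem_support_iff.mpr hc.1) (Finsupp.mem_support_iff.mpr hc.2)
      have h1 := Finsupp.le_def.mp hale j
      have h2 := Finsupp.le_def.mp hble j
      simp only [Finsupp.add_apply]
      omega
    · exact Ideal.mul_le_inf
end

section
/- Let $h_1, \ldots, h_k$ be a regular sequence in a commutative Noetherian ring $R$, and let $J = \langle h_1, \ldots, h_{k-1} \rangle$. Then $h_k$ is a non-zerodivisor on $R/J^r$ for every integer $r \geq 1$. -/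
/-!
A sequence `x₁, …, xₙ` generating `I` is quasi-regular when every form `F` of degree `d` with
`F(x) = 0` (equivalently, with `F(x) ∈ I^(d+1)`) has all its coefficients in `I`; this says that
`gr_I R ≅ (R/I)[X₁, …, Xₙ]`. Two facts feed each other in an induction on `n`.

For a quasi-regular sequence, an element `y` regular on `R/I` is regular on every `R/I^r`: if
`y t ∈ I^(r+1)`, inductively `t ∈ I^r`, so `t = F(x)` for a form `F` of degree `r`; quasi-regularity
puts the coefficients of `y F`, hence those of `F`, in `I`, so `t ∈ I^(r+1)`.

Weakly regular sequences are quasi-regular. For a relation `F = G(X₁, …, Xₙ₋₁) + Xₙ H` of degree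
`d + 1`, with `I' = (x₁, …, xₙ₋₁)`: `xₙ H(x) = -G(x) ∈ I'^(d+1)`, and `xₙ` is regular modulo the
powers of `I'`, so `H(x) ∈ I'^(d+1)` and the coefficients of `H` lie in `I` by induction on `d`.
Writing `H(x) = G₁(x₁, …, xₙ₋₁)`, the relation `G + xₙ G₁` puts those of `G` in `I' + (xₙ) = I`.
-/

open MvPolynomial RingTheory.Sequence

variable {R : Type*} [CommRing R]

namespace MvPolynomial

variable {σ : Type*}

theorem rename_mem_map_C {τ : Type*} (f : σ → τ) {K : Ideal R} {G : MvPolynomial σ R}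
    (hG : G ∈ Ideal.map C K) : rename f G ∈ Ideal.map (C : R →+* MvPolynomial τ R) K := by
  have h := Ideal.mem_map_of_mem (rename f : MvPolynomial σ R →ₐ[R] MvPolynomial τ R).toRingHom hG
  rwa [Ideal.map_map, show (rename f).toRingHom.comp C = C from RingHom.ext (rename_C f)] at h

theorem eq_zero_of_isHomogeneous_zero_of_eval_eq_zero {F : MvPolynomial σ R}
    (hF : F.IsHomogeneous 0) {x : σ → R} (h : eval x F = 0) : F = 0 := by
  have hC := totalDegree_eq_zero_iff_eq_C.1 ((totalDegree_zero_iff_isHomogeneous σ).2 hF)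
  rw [hC, eval_C] at h
  rw [hC, h, C_0]

theorem IsHomogeneous.eval_mem_mul_span_pow {K : Ideal R} {d : ℕ} {F : MvPolynomial σ R}
    (hF : F.IsHomogeneous d) (hK : F ∈ Ideal.map C K) (x : σ → R) :
    eval x F ∈ K * Ideal.span (Set.range x) ^ d := by
  rw [F.as_sum, map_sum]
  refine Ideal.sum_mem _ fun α hα => ?_
  have hxα : eval x (monomial α 1) ∈ Ideal.span (Set.range x) ^ d :=
    (Ideal.mem_span_pow_iff_exists_isHomogeneous x _).2
      ⟨_, isHomogeneous_monomial 1 (hF.degree_eq_sum_deg_support hα).symm, rfl⟩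
  simpa [eval_monomial] using Ideal.mul_mem_mul (mem_map_C_iff.1 hK α) hxα

theorem exists_isHomogeneous_mem_map_C_of_mem_mul_span_pow {K : Ideal R} {d : ℕ} (x : σ → R)
    {t : R} (ht : t ∈ K * Ideal.span (Set.range x) ^ d) :
    ∃ F : MvPolynomial σ R, F.IsHomogeneous d ∧ F ∈ Ideal.map C K ∧ eval x F = t := by
  refine Submodule.mul_induction_on ht (fun a ha b hb => ?_) ?_
  · obtain ⟨G, hG, rfl⟩ := (Ideal.mem_span_pow_iff_exists_isHomogeneous x b).1 hb
    exact ⟨C a * G, hG.C_mul a, Ideal.mul_mem_right _ _ (Ideal.mem_map_of_mem C ha), by simp⟩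
  · rintro _ _ ⟨F, hF, hFK, rfl⟩ ⟨G, hG, hGK, rfl⟩
    exact ⟨F + G, hF.add hG, add_mem hFK hGK, map_add _ _ _⟩

theorem IsHomogeneous.exists_eq_rename_castSucc_add_X_last_mul {n d : ℕ}
    {F : MvPolynomial (Fin (n + 1)) R} (hF : F.IsHomogeneous (d + 1)) :
    ∃ (G : MvPolynomial (Fin n) R) (H : MvPolynomial (Fin (n + 1)) R),
      G.IsHomogeneous (d + 1) ∧ H.IsHomogeneous d ∧
        F = rename Fin.castSucc G + X (Fin.last n) * H := by
  classical
  rw [F.as_sum]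
  refine Finset.sum_induction _ (fun P => ∃ (G : MvPolynomial (Fin n) R)
      (H : MvPolynomial (Fin (n + 1)) R), G.IsHomogeneous (d + 1) ∧ H.IsHomogeneous d ∧
        P = rename Fin.castSucc G + X (Fin.last n) * H) ?_ ?_ fun α hα => ?_
  · rintro _ _ ⟨G₁, H₁, hG₁, hH₁, rfl⟩ ⟨G₂, H₂, hG₂, hH₂, rfl⟩
    exact ⟨G₁ + G₂, H₁ + H₂, hG₁.add hG₂, hH₁.add hH₂, by rw [map_add]; ring⟩
  · exact ⟨0, 0, isHomogeneous_zero _ R _, isHomogeneous_zero _ R _, by simp⟩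
  have hα_deg : α.degree = d + 1 := (hF.degree_eq_sum_deg_support hα).symm
  by_cases hlast : α (Fin.last n) = 0
  · have hsupp : (α.support : Set (Fin (n + 1))) ⊆ Set.range Fin.castSucc := fun i hi =>
      Fin.exists_castSucc_eq.2 fun h => Finsupp.mem_support_iff.1 hi (h ▸ hlast)
    have hren : rename Fin.castSucc (monomial (α.comapDomain Fin.castSucc
        (Fin.castSucc_injective n).injOn) (F.coeff α)) = monomial α (F.coeff α) := by
      rw [rename_monomial, Finsupp.mapDomain_comapDomain _ (Fin.castSucc_injective n) _ hsupp]
    refine ⟨_, 0, ?_, isHomogeneous_zero _ R _, by rw [hren, mul_zero, add_zero]⟩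
    rw [← rename_isHomogeneous_iff (Fin.castSucc_injective n), hren]
    exact isHomogeneous_monomial _ hα_deg
  · have hle : Finsupp.single (Fin.last n) 1 ≤ α :=
      Finsupp.single_le_iff.2 (Nat.one_le_iff_ne_zero.2 hlast)
    refine ⟨0, monomial (α - Finsupp.single (Fin.last n) 1) (F.coeff α), isHomogeneous_zero _ R _,
      isHomogeneous_monomial _ ?_, ?_⟩
    · have := congrArg Finsupp.degree (add_tsub_cancel_of_le hle)
      rw [map_add, Finsupp.degree_single, hα_deg] at this
      omega
    · rw [map_zero, zero_add, ← pow_one (X _), ← monomial_single_add, add_tsub_cancel_of_le hle]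

theorem mem_map_C_of_eval_mem_span_pow_succ {x : σ → R} {d : ℕ}
    (hd : ∀ F : MvPolynomial σ R, F.IsHomogeneous d → eval x F = 0 →
      F ∈ Ideal.map C (Ideal.span (Set.range x)))
    {F : MvPolynomial σ R} (hF : F.IsHomogeneous d)
    (h : eval x F ∈ Ideal.span (Set.range x) ^ (d + 1)) :
    F ∈ Ideal.map C (Ideal.span (Set.range x)) := by
  rw [pow_succ'] at h
  obtain ⟨G, hG, hGI, hGF⟩ := exists_isHomogeneous_mem_map_C_of_mem_mul_span_pow x h
  simpa using add_mem (hd (F - G) (hF.sub hG) (by simp [hGF])) hGI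

end MvPolynomial

theorem Ideal.ofList_ofFn {n : ℕ} (x : Fin n → R) :
    Ideal.ofList (List.ofFn x) = Ideal.span (Set.range x) :=
  congrArg Ideal.span (Set.ext (List.mem_ofFn' x))

namespace RingTheory.Sequence

variable {σ : Type*}

def IsQuasiRegular (x : σ → R) : Prop :=
  ∀ ⦃d : ℕ⦄ ⦃F : MvPolynomial σ R⦄, F.IsHomogeneous d → eval x F = 0 →
    F ∈ Ideal.map C (Ideal.span (Set.range x))

theorem IsQuasiRegular.mem_map_C_of_eval_mem_span_pow_succ {x : σ → R} (hx : IsQuasiRegular x)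
    {d : ℕ} {F : MvPolynomial σ R} (hF : F.IsHomogeneous d)
    (h : eval x F ∈ Ideal.span (Set.range x) ^ (d + 1)) :
    F ∈ Ideal.map C (Ideal.span (Set.range x)) :=
  MvPolynomial.mem_map_C_of_eval_mem_span_pow_succ (fun _ hF h0 => hx hF h0) hF h

theorem IsQuasiRegular.isSMulRegular_quotient_pow {x : σ → R} (hx : IsQuasiRegular x) {y : R}
    (hy : IsSMulRegular (R ⧸ Ideal.span (Set.range x)) y) (r : ℕ) :
    IsSMulRegular (R ⧸ Ideal.span (Set.range x) ^ r) y := by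
  rw [isSMulRegular_quotient_iff_mem_of_smul_mem]
  induction r with
  | zero => simp
  | succ r ih =>
    intro t ht
    obtain ⟨F, hF, rfl⟩ := (Ideal.mem_span_pow_iff_exists_isHomogeneous x t).1
      (ih t (Ideal.pow_le_pow_right r.le_succ ht))
    have hyF : C y * F ∈ Ideal.map C (Ideal.span (Set.range x)) :=
      hx.mem_map_C_of_eval_mem_span_pow_succ (hF.C_mul y) (by simpa using ht)
    have hF_mem : F ∈ Ideal.map C (Ideal.span (Set.range x)) := mem_map_C_iff.2 fun α =>
      mem_of_isSMulRegular_quotient_of_smul_mem hy (by simpa using mem_map_C_iff.1 hyF α)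
    simpa [pow_succ'] using hF.eval_mem_mul_span_pow hF_mem x

theorem isWeaklyRegular_ofFn_succ_iff {n : ℕ} (x : Fin (n + 1) → R) :
    IsWeaklyRegular R (List.ofFn x) ↔
      IsWeaklyRegular R (List.ofFn fun i : Fin n => x i.castSucc) ∧
        IsSMulRegular (R ⧸ Ideal.span (Set.range fun i : Fin n => x i.castSucc))
          (x (Fin.last n)) := by
  rw [List.ofFn_succ', List.concat_eq_append, isWeaklyRegular_append_iff,
    isWeaklyRegular_singleton_iff, Ideal.ofList_ofFn, smul_eq_mul, Ideal.mul_top]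

theorem mem_map_C_of_isHomogeneous_succ_of_eval_eq_zero {n d : ℕ} {x : Fin (n + 1) → R}
    (hx : IsQuasiRegular fun i : Fin n => x i.castSucc)
    (hlast : ∀ r, IsSMulRegular (R ⧸ Ideal.span (Set.range fun i : Fin n => x i.castSucc) ^ r)
      (x (Fin.last n)))
    (hd : ∀ H : MvPolynomial (Fin (n + 1)) R, H.IsHomogeneous d → eval x H = 0 →
      H ∈ Ideal.map C (Ideal.span (Set.range x)))
    {F : MvPolynomial (Fin (n + 1)) R} (hF : F.IsHomogeneous (d + 1)) (h0 : eval x F = 0) :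
    F ∈ Ideal.map C (Ideal.span (Set.range x)) := by
  set x' : Fin n → R := fun i => x i.castSucc
  set y := x (Fin.last n)
  have hI' : Ideal.span (Set.range x') ≤ Ideal.span (Set.range x) :=
    Ideal.span_mono (Set.range_comp_subset_range _ x)
  have hy : C y ∈ Ideal.map (C : R →+* MvPolynomial (Fin n) R) (Ideal.span (Set.range x)) :=
    Ideal.mem_map_of_mem C (Ideal.subset_span ⟨_, rfl⟩)
  obtain ⟨G, H, hG, hH, rfl⟩ := hF.exists_eq_rename_castSucc_add_X_last_mul
  have hGH : eval x' G + y * eval x H = 0 := by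
    rwa [map_add, map_mul, eval_rename, eval_X] at h0
  have hH' : eval x H ∈ Ideal.span (Set.range x') ^ (d + 1) := by
    refine mem_of_isSMulRegular_quotient_of_smul_mem (hlast (d + 1)) ?_
    rw [smul_eq_mul, eq_neg_of_add_eq_zero_right hGH]
    exact neg_mem ((Ideal.mem_span_pow_iff_exists_isHomogeneous x' _).2 ⟨G, hG, rfl⟩)
  have hH_mem : H ∈ Ideal.map C (Ideal.span (Set.range x)) :=
    mem_map_C_of_eval_mem_span_pow_succ hd hH (Ideal.pow_right_mono hI' _ hH')
  obtain ⟨G₁, hG₁, hG₁H⟩ := (Ideal.mem_span_pow_iff_exists_isHomogeneous x' _).1 hH'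
  have hrel : G + C y * G₁ ∈ Ideal.map C (Ideal.span (Set.range x)) :=
    Ideal.map_mono hI' (hx (hG.add (hG₁.C_mul y)) (by simp [hG₁H, hGH]))
  have hG_mem : G ∈ Ideal.map C (Ideal.span (Set.range x)) := by
    simpa using sub_mem hrel (Ideal.mul_mem_right G₁ _ hy)
  exact add_mem (rename_mem_map_C _ hG_mem) (Ideal.mul_mem_left _ _ hH_mem)

theorem isQuasiRegular_of_isWeaklyRegular : ∀ {n : ℕ} {x : Fin n → R},
    IsWeaklyRegular R (List.ofFn x) → IsQuasiRegular x
  | 0, x, _ => fun _ F _ h0 => by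
    rw [eq_zero_of_isHomogeneous_zero_of_eval_eq_zero (isHomogeneous_of_isEmpty _ _ F) h0]
    exact zero_mem _
  | n + 1, x, hx => by
    obtain ⟨hx', hlast⟩ := (isWeaklyRegular_ofFn_succ_iff x).1 hx
    have hqr := isQuasiRegular_of_isWeaklyRegular hx'
    intro d
    induction d with
    | zero =>
      intro F hF h0
      rw [eq_zero_of_isHomogeneous_zero_of_eval_eq_zero hF h0]
      exact zero_mem _
    | succ d ih =>
      exact fun F => mem_map_C_of_isHomogeneous_succ_of_eval_eq_zero hqr
        (hqr.isSMulRegular_quotient_pow hlast) ih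

end RingTheory.Sequence

theorem last_nonZeroDivisor_on_quot_pow_general {R : Type} [CommRing R]
    {k : ℕ} (h : Fin (k + 1) → R)
    (hreg : RingTheory.Sequence.IsRegular R (List.ofFn h))
    (J : Ideal R) (hJ : J = Ideal.span (Set.range fun i : Fin k => h i.castSucc))
    (r : ℕ) :
    ∀ p : R, h (Fin.last k) * p ∈ J ^ r → p ∈ J ^ r := by
  subst hJ
  obtain ⟨hprefix, hlast⟩ := (isWeaklyRegular_ofFn_succ_iff h).1 hreg.toIsWeaklyRegular
  exact fun p => mem_of_isSMulRegular_quotient_of_smul_mem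
    ((isQuasiRegular_of_isWeaklyRegular hprefix).isSMulRegular_quotient_pow hlast r)

/-- If `h₁, …, h_k` is a regular sequence in a commutative Noetherian ring `R` and
`J = ⟨h₁, …, h_{k-1}⟩`, then `h_k` is a non-zerodivisor on `R / Jʳ` for every `r ≥ 1`. -/
theorem last_nonZeroDivisor_on_quot_pow {R : Type} [CommRing R] [IsNoetherianRing R]
    {k : ℕ} (h : Fin (k + 1) → R)
    (hreg : RingTheory.Sequence.IsRegular R (List.ofFn h))
    (J : Ideal R) (hJ : J = Ideal.span (Set.range fun i : Fin k => h i.castSucc))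
    (r : ℕ) (hr : 1 ≤ r) :
    ∀ p : R, h (Fin.last k) * p ∈ J ^ r → p ∈ J ^ r :=
  last_nonZeroDivisor_on_quot_pow_general h hreg J hJ r
end

section
/- Let $I$ and $J$ be ideals in a commutative ring $R$ such that $J$ is generated by a sequence $g_1, \ldots, g_k$ whose images form a regular sequence on $R/I$. Then $I \cap J = I \cdot J$. -/
open RingTheory.Sequence

/-- If `a` is smul-regular on `(R⧸I)⧸K•⊤` and `a * c ∈ I ⊔ K`, then `c ∈ I ⊔ K`. -/
lemma aux_smul_regular_mem {R : Type} [CommRing R] (I K : Ideal R) (a : R)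
    (h : IsSMulRegular ((R ⧸ I) ⧸ (K • (⊤ : Submodule R (R ⧸ I)))) a)
    {c : R} (hc : a * c ∈ I ⊔ K) : c ∈ I ⊔ K := by
  have hker : ∀ x : R, Ideal.Quotient.mk I x ∈ (K • (⊤ : Submodule R (R ⧸ I))) ↔
      x ∈ I ⊔ K := by
    intro x
    rw [Ideal.smul_top_eq_map]
    have : (algebraMap R (R ⧸ I)) = Ideal.Quotient.mk I := rfl
    rw [Submodule.restrictScalars_mem, this, ← Ideal.mem_comap,
      Ideal.comap_map_of_surjective _ Ideal.Quotient.mk_surjective,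
      ← RingHom.ker_eq_comap_bot, Ideal.mk_ker, sup_comm]
  set q : R → (R ⧸ I) ⧸ (K • (⊤ : Submodule R (R ⧸ I))) :=
    fun x => Submodule.Quotient.mk (Ideal.Quotient.mk I x) with hq
  have hzero : q (a * c) = 0 := by
    rw [hq]
    simpa [Submodule.Quotient.mk_eq_zero] using (hker (a * c)).mpr hc
  have hsmul : a • q c = q (a * c) := by
    rw [hq]
    simp only [← Submodule.Quotient.mk_smul, Algebra.smul_def]
    rfl
  have : q c = 0 := by
    apply h
    show a • q c = a • 0
    rw [smul_zero, hsmul, hzero]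
  rw [hq] at this
  rw [sup_comm]
  simpa [Submodule.Quotient.mk_eq_zero, hker, sup_comm] using this

lemma aux_inf_eq_mul {R : Type} [CommRing R] (I : Ideal R) (rs : List R)
    (hreg : IsWeaklyRegular (R ⧸ I) rs) :
    I ⊓ Ideal.ofList rs = I * Ideal.ofList rs := by
  induction rs using List.reverseRecOn with
  | nil => simp
  | append_singleton rs a ih =>
    rw [isWeaklyRegular_append_iff] at hreg
    obtain ⟨h1, h2⟩ := hreg
    rw [isWeaklyRegular_singleton_iff] at h2
    have IH := ih h1
    rw [Ideal.ofList_append, Ideal.ofList_singleton]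
    refine le_antisymm ?_ Ideal.mul_le_inf
    rintro x ⟨hxI, hxJ⟩
    obtain ⟨y, hy, z, hz, rfl⟩ := Submodule.mem_sup.mp hxJ
    obtain ⟨c, rfl⟩ := Ideal.mem_span_singleton'.mp hz
    have hac : a * c ∈ I ⊔ Ideal.ofList rs := by
      have : a * c = (y + c * a) - y := by ring
      rw [this]
      exact sub_mem (Ideal.mem_sup_left hxI) (Ideal.mem_sup_right hy)
    obtain ⟨b, hb, d, hd, hbd⟩ := Submodule.mem_sup.mp (aux_smul_regular_mem I _ a h2 hac)
    have key : y + c * a = (y + d * a) + b * a := by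
      rw [← hbd]; ring
    rw [key]
    have h3 : y + d * a ∈ I * Ideal.ofList rs := by
      rw [← IH]
      constructor
      · have : y + d * a = (y + c * a) - b * a := by rw [← hbd]; ring
        rw [this]
        exact sub_mem hxI (Ideal.mul_mem_right a I hb)
      · exact add_mem hy (Ideal.mul_mem_right a _ hd)
    have h4 : b * a ∈ I * Ideal.span {a} :=
      Ideal.mul_mem_mul hb (Ideal.mem_span_singleton_self a)
    exact add_mem
      (Ideal.mul_mono_right le_sup_left h3)
      (Ideal.mul_mono_right le_sup_right h4)

/-- If `J` is generated by a sequence `g₁, …, g_k` whose images form a regular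
sequence on `R/I`, then `I ∩ J = I·J`. -/
theorem inf_eq_mul_of_regular_sequence {R : Type} [CommRing R] (I J : Ideal R)
    {k : ℕ} (g : Fin k → R) (hJ : J = Ideal.span (Set.range g))
    (hreg : RingTheory.Sequence.IsRegular (R ⧸ I) (List.ofFn g)) :
    I ⊓ J = I * J := by
  have hJ' : J = Ideal.ofList (List.ofFn g) := by
    rw [hJ]
    congr 1
    ext x
    simp [List.mem_ofFn]
  rw [hJ']
  exact aux_inf_eq_mul I _ hreg.toIsWeaklyRegular
end

section
/- Let $I$ and $J$ be ideals in a commutative Noetherian ring $R$ such that $J$ is generated by a sequence $g_1, \ldots, g_k$ whose images form a regular sequence on $R/I$. Then $I \cap J^r = I \cdot J^r$ for every positive integer $r$. -/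
/-!
Induct on the length of the sequence. Peeling off its first element `a` writes `J = (a) + J₁`,
where the rest of the sequence generates `J₁` and is regular on `R/(I + (a))`, so by induction
`(I + (a)) ∩ J₁ⁿ = (I + (a))·J₁ⁿ` for all `n`. Now induct on `r`. Since
`J^(r+1) ⊆ a·J^r + J₁^(r+1)`, an element of `I ∩ J^(r+1)` is `x = a·u + h` with `u ∈ J^r` and
`h ∈ (I + (a)) ∩ J₁^(r+1) = I·J₁^(r+1) + a·J₁^(r+1)`, say `h = i + a·w`. Then `a·(u + w) = x - i`
lies in `I`, so regularity of `a` on `R/I` puts `u + w` in `I ∩ J^r = I·J^r`, and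
`x = a·(u + w) + i ∈ I·J^(r+1)`.
-/

open Submodule RingTheory.Sequence

namespace Ideal

variable {R : Type*} [CommRing R]

lemma sup_pow_succ_le_mul_pow_sup (I J : Ideal R) (n : ℕ) :
    (I ⊔ J) ^ (n + 1) ≤ I * (I ⊔ J) ^ n ⊔ J ^ (n + 1) := by
  induction n with
  | zero => simp
  | succ n ih =>
    calc (I ⊔ J) ^ (n + 2) = (I ⊔ J) ^ (n + 1) * (I ⊔ J) := pow_succ _ _
      _ ≤ (I * (I ⊔ J) ^ n ⊔ J ^ (n + 1)) * (I ⊔ J) := mul_mono_left ih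
      _ = I * (I ⊔ J) ^ (n + 1) ⊔ (J ^ (n + 1) * I ⊔ J ^ (n + 2)) := by
        rw [sup_mul, mul_assoc, ← pow_succ, mul_sup, ← pow_succ]
      _ ≤ I * (I ⊔ J) ^ (n + 1) ⊔ J ^ (n + 2) := by
        rw [← sup_assoc]
        refine sup_le_sup_right (sup_le le_rfl ?_) _
        rw [mul_comm]
        exact mul_mono_right (pow_right_mono le_sup_right _)

def quotSMulTopEquivQuotientSup (I : Ideal R) (a : R) :
    QuotSMulTop a (R ⧸ I) ≃ₗ[R] R ⧸ (I ⊔ span {a}) :=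
  Submodule.quotEquivOfEq _ _ (by
      rw [← I.range_mkQ, LinearMap.range_eq_map, ← Submodule.map_pointwise_smul,
        ← ideal_span_singleton_smul, smul_eq_mul, mul_top]) ≪≫ₗ
    quotientQuotientEquivQuotientSup I (span {a})

theorem inf_pow_eq_mul_pow_of_isSMulRegular {I J : Ideal R} {a : R}
    (ha : IsSMulRegular (R ⧸ I) a)
    (hJ : ∀ n, (I ⊔ span {a}) ⊓ J ^ n = (I ⊔ span {a}) * J ^ n) (r : ℕ) :
    I ⊓ (span {a} ⊔ J) ^ r = I * (span {a} ⊔ J) ^ r := by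
  set K := span {a} ⊔ J
  refine le_antisymm ?_ mul_le_inf
  induction r with
  | zero => simp
  | succ r ih =>
    rintro x ⟨hxI, hxK⟩
    obtain ⟨p, hp, h, hh, rfl⟩ := mem_sup.mp (sup_pow_succ_le_mul_pow_sup _ _ r hxK)
    obtain ⟨u, hu, rfl⟩ := mem_span_singleton_mul.mp hp
    have hh' : h ∈ (I ⊔ span {a}) * J ^ (r + 1) := by
      rw [← hJ]
      refine ⟨?_, hh⟩
      have := sub_mem (mem_sup_left hxI)
        (mem_sup_right (mem_span_singleton.mpr (dvd_mul_right a u)) : a * u ∈ I ⊔ span {a})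
      rwa [add_sub_cancel_left] at this
    rw [sup_mul] at hh'
    obtain ⟨i, hi, q, hq, rfl⟩ := mem_sup.mp hh'
    obtain ⟨w, hw, rfl⟩ := mem_span_singleton_mul.mp hq
    have huwI : u + w ∈ I := by
      refine mem_of_isSMulRegular_quotient_of_smul_mem ha ?_
      rw [smul_eq_mul, show a * (u + w) = a * u + (i + a * w) - i by ring]
      exact sub_mem hxI (mul_le_left hi)
    have hJK : J ^ (r + 1) ≤ K ^ (r + 1) := pow_right_mono le_sup_right _
    have huwK : u + w ∈ K ^ r := add_mem hu (Ideal.pow_le_pow_right r.le_succ (hJK hw))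
    have hauw : (u + w) * a ∈ I * K ^ (r + 1) := by
      rw [pow_succ, ← mul_assoc]
      exact mul_mem_mul (ih ⟨huwI, huwK⟩) (mem_sup_left (mem_span_singleton_self a))
    rw [show a * u + (i + a * w) = (u + w) * a + i by ring]
    exact add_mem hauw (mul_mono_right hJK hi)

theorem inf_pow_eq_mul_pow_of_isWeaklyRegular {I : Ideal R} {rs : List R}
    (h : IsWeaklyRegular (R ⧸ I) rs) (r : ℕ) : I ⊓ ofList rs ^ r = I * ofList rs ^ r := by
  induction rs generalizing I r with
  | nil => cases r <;> simp
  | cons a rs ih =>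
    rw [isWeaklyRegular_cons_iff, (quotSMulTopEquivQuotientSup I a).isWeaklyRegular_congr] at h
    rw [ofList_cons]
    exact inf_pow_eq_mul_pow_of_isSMulRegular h.1 (ih h.2) r

end Ideal

theorem inf_pow_eq_mul_pow_of_regular_sequence_general {R : Type} [CommRing R]
    (I J : Ideal R) {k : ℕ} (g : Fin k → R) (hJ : J = Ideal.span (Set.range g))
    (hreg : RingTheory.Sequence.IsRegular (R ⧸ I) (List.ofFn g)) :
    ∀ r : ℕ, 1 ≤ r → I ⊓ J ^ r = I * J ^ r := by
  have hJ_ofList : J = Ideal.ofList (List.ofFn g) := by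
    rw [hJ, Ideal.ofList]
    congr 1
    ext y
    exact (List.mem_ofFn' g y).symm
  subst hJ_ofList
  exact fun r _ => Ideal.inf_pow_eq_mul_pow_of_isWeaklyRegular hreg.toIsWeaklyRegular r

/-- If `J` is generated by a sequence `g₁, …, g_k` whose images form a regular
sequence on `R/I` (with `R` Noetherian), then `I ∩ Jʳ = I·Jʳ` for every `r ≥ 1`. -/
theorem inf_pow_eq_mul_pow_of_regular_sequence {R : Type} [CommRing R] [IsNoetherianRing R]
    (I J : Ideal R) {k : ℕ} (g : Fin k → R) (hJ : J = Ideal.span (Set.range g))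
    (hreg : RingTheory.Sequence.IsRegular (R ⧸ I) (List.ofFn g)) :
    ∀ r : ℕ, 1 ≤ r → I ⊓ J ^ r = I * J ^ r :=
  inf_pow_eq_mul_pow_of_regular_sequence_general I J g hJ hreg
end

section
/- Let $R$ be a commutative ring, $I$ an ideal, and $x \in R$ a non-zerodivisor of $R$. Then $I \cap \langle x \rangle = I \cdot \langle x \rangle$ if and only if the image of $x$ in $R/I$ is a non-zerodivisor. -/
/-- For an ideal `I` and a non-zerodivisor `x` of a commutative ring `R`,
`I ∩ ⟨x⟩ = I·⟨x⟩` iff the image of `x` in `R/I` is a non-zerodivisor. -/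
theorem inf_span_singleton_eq_mul_iff {R : Type} [CommRing R] (I : Ideal R) (x : R)
    (hx : ∀ p : R, x * p = 0 → p = 0) :
    I ⊓ Ideal.span {x} = I * Ideal.span {x} ↔ ∀ p : R, x * p ∈ I → p ∈ I := by
  constructor
  · intro h p hp
    have hmem : x * p ∈ I ⊓ Ideal.span {x} :=
      ⟨hp, Ideal.mem_span_singleton.mpr ⟨p, rfl⟩⟩
    rw [h, Ideal.mem_mul_span_singleton] at hmem
    obtain ⟨z, hz, hzx⟩ := hmem
    have h0 : x * (p - z) = 0 := by linear_combination -hzx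
    have := sub_eq_zero.mp (hx _ h0)
    exact this ▸ hz
  · intro h
    refine le_antisymm ?_ Ideal.mul_le_inf
    intro a hmem
    rw [Ideal.mem_inf] at hmem
    obtain ⟨ha, hax⟩ := hmem
    obtain ⟨p, rfl⟩ := Ideal.mem_span_singleton.mp hax
    exact Ideal.mem_mul_span_singleton.mpr ⟨p, h p ha, mul_comm p x⟩
end

section
/- Let $N$ be an $R$-module, $h_1, \ldots, h_k$ an $N$-regular sequence in $R$, and $J = \langle h_1, \ldots, h_k \rangle$. If $F(y_1, \ldots, y_k)$ is a homogeneous polynomial of degree $r$ with coefficients in $N$ and $F(h_1, \ldots, h_k) \in J^{r+1} N$, then all coefficients of $F$ lie in $J N$. -/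
/-!
Call `h` quasi-regular on a set `s` of variables if the conclusion of the theorem holds for forms
in these variables, in every degree; this is built up one element of the regular sequence at a
time. Suppose `h` is quasi-regular on `s`, with `J' = (h i : i ∈ s)`, that `z = h a` is regular on
`N / J'N`, and let `J = J' + (z)`. Quasi-regularity first gives `(J'^t N : z) = J'^t N` for all
`t`, by induction on `t`. Now let `F = F₀ + y_a F₁` have degree `t + 1`, where `F₀` does not
involve `y_a`, and `F(h) ∈ J^{t+2} N`. Write `F(h) = G(h)` with `G` of degree `t + 2` and split
`G = G₀ + y_a G₁` in the same way. Then `z (G₁(h) - F₁(h)) = F₀(h) - G₀(h) ∈ J'^{t+1} N`, so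
`x = G₁(h) - F₁(h)` lies in `J'^{t+1} N`, and induction on the degree puts the coefficients of
`F₁` in `JN`. Writing `x = K(h)` with `K` a form in the variables `s`, the form `F₀ - z K` takes
the value `G₀(h) ∈ J'^{t+2} N`, so quasi-regularity on `s` puts the coefficients of `F₀` in `JN`.
-/

open Finset

variable {ι R N : Type*}

lemma Finsupp.tsub_single_add_single {d : ι →₀ ℕ} {a : ι} (hda : d a ≠ 0) :
    d - Finsupp.single a 1 + Finsupp.single a 1 = d :=
  tsub_add_cancel_of_le (Finsupp.single_le_iff.mpr (Nat.one_le_iff_ne_zero.mpr hda))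

section Monomials

variable [CommSemiring R] {h : ι → R} {s : Finset ι}

lemma prod_pow_add_single {a : ι} (ha : a ∈ s) (e : ι →₀ ℕ) :
    ∏ i ∈ s, h i ^ (e + Finsupp.single a 1 : ι →₀ ℕ) i = h a * ∏ i ∈ s, h i ^ e i := by
  rw [Finsupp.coe_add]
  simp only [Pi.add_apply, pow_add, prod_mul_distrib, mul_comm (∏ i ∈ s, h i ^ e i)]
  rw [prod_eq_single_of_mem a ha fun i _ hia => by rw [Finsupp.single_eq_of_ne hia, pow_zero]]
  simp

lemma prod_pow_mem_pow {I : Ideal R} (hI : ∀ i ∈ s, h i ∈ I) (d : ι →₀ ℕ) :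
    ∏ i ∈ s, h i ^ d i ∈ I ^ ∑ i ∈ s, d i := by
  rw [← prod_pow_eq_pow_sum]
  exact Ideal.prod_mem_prod fun i hi => Ideal.pow_mem_pow (hI i hi) _

end Monomials

variable [DecidableEq ι]

namespace Finset

lemma mem_finsuppAntidiag_erase {s : Finset ι} {a : ι} {n : ℕ} {d : ι →₀ ℕ} :
    d ∈ finsuppAntidiag (s.erase a) n ↔ d ∈ finsuppAntidiag s n ∧ d a = 0 := by
  have hsum (hda : d a = 0) : ∑ i ∈ s.erase a, d i = ∑ i ∈ s, d i :=
    sum_subset (erase_subset a s) fun i hi hia => by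
      rwa [of_not_not fun hne => hia (mem_erase_of_ne_of_mem hne hi)]
  simp only [mem_finsuppAntidiag]
  constructor
  · rintro ⟨rfl, hsupp⟩
    have hda : d a = 0 := Finsupp.notMem_support_iff.mp fun ha => notMem_erase a s (hsupp ha)
    exact ⟨⟨(hsum hda).symm, hsupp.trans (erase_subset a s)⟩, hda⟩
  · rintro ⟨⟨rfl, hsupp⟩, hda⟩
    refine ⟨hsum hda, fun i hi => mem_erase.mpr ⟨?_, hsupp hi⟩⟩
    rintro rfl
    exact Finsupp.mem_support_iff.mp hi hda

lemma add_single_mem_finsuppAntidiag {s : Finset ι} {a : ι} (ha : a ∈ s) {n : ℕ}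
    {e : ι →₀ ℕ} (he : e ∈ finsuppAntidiag s n) :
    e + Finsupp.single a 1 ∈ finsuppAntidiag s (n + 1) := by
  rw [mem_finsuppAntidiag] at he ⊢
  refine ⟨?_, Finsupp.support_add.trans (union_subset he.2 ?_)⟩
  · simp [sum_add_distrib, he.1, Finsupp.single_apply, ha]
  · simpa using ha

lemma sub_single_mem_finsuppAntidiag {s : Finset ι} {a : ι} {n : ℕ} {d : ι →₀ ℕ}
    (hd : d ∈ finsuppAntidiag s (n + 1)) (hda : d a ≠ 0) :
    d - Finsupp.single a 1 ∈ finsuppAntidiag s n := by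
  have ha : a ∈ s := (mem_finsuppAntidiag.mp hd).2 (Finsupp.mem_support_iff.mpr hda)
  rw [← Finsupp.tsub_single_add_single hda, mem_finsuppAntidiag] at hd
  rw [mem_finsuppAntidiag]
  refine ⟨?_, fun i hi => hd.2 (Finsupp.support_mono le_self_add hi)⟩
  simpa [sum_add_distrib, Finsupp.single_apply, ha] using hd.1

lemma forall_mem_finsuppAntidiag_succ {s : Finset ι} {a : ι} {n : ℕ} {p : (ι →₀ ℕ) → Prop}
    (h₀ : ∀ d ∈ finsuppAntidiag (s.erase a) (n + 1), p d)
    (h₁ : ∀ e ∈ finsuppAntidiag s n, p (e + Finsupp.single a 1)) :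
    ∀ d ∈ finsuppAntidiag s (n + 1), p d := by
  intro d hd
  by_cases hda : d a = 0
  · exact h₀ d (mem_finsuppAntidiag_erase.mpr ⟨hd, hda⟩)
  · rw [← Finsupp.tsub_single_add_single hda]
    exact h₁ _ (sub_single_mem_finsuppAntidiag hd hda)

lemma sum_finsuppAntidiag_succ {M : Type*} [AddCommMonoid M] {s : Finset ι} {a : ι}
    (ha : a ∈ s) (n : ℕ) (f : (ι →₀ ℕ) → M) :
    ∑ d ∈ finsuppAntidiag s (n + 1), f d =
      ∑ d ∈ finsuppAntidiag (s.erase a) (n + 1), f d +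
        ∑ e ∈ finsuppAntidiag s n, f (e + Finsupp.single a 1) := by
  rw [← sum_filter_add_sum_filter_not _ (fun d => d a = 0)]
  congr 1
  · congr 1
    ext d
    rw [mem_filter, mem_finsuppAntidiag_erase]
  · have hcancel (d : ι →₀ ℕ) (hd : d ∈ (finsuppAntidiag s (n + 1)).filter (¬· a = 0)) :
        d - Finsupp.single a 1 + Finsupp.single a 1 = d :=
      Finsupp.tsub_single_add_single (mem_filter.mp hd).2
    refine sum_nbij' (· - Finsupp.single a 1) (· + Finsupp.single a 1) ?_ ?_ hcancel ?_ ?_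
    · intro d hd
      rw [mem_filter] at hd
      exact sub_single_mem_finsuppAntidiag hd.1 hd.2
    · intro e he
      rw [mem_filter]
      exact ⟨add_single_mem_finsuppAntidiag ha he, by simp⟩
    · intro e _
      exact add_tsub_cancel_right e _
    · intro d hd
      rw [hcancel d hd]

end Finset

section Forms

variable [CommSemiring R] [AddCommMonoid N] [Module R N]

/-- A form of degree `t` in the variables `(y i)_{i ∈ s}` is encoded by a coefficient function
`C : (ι →₀ ℕ) → N`, of which only the values on `finsuppAntidiag s t` matter. -/
noncomputable def evalForm (h : ι → R) (s : Finset ι) (t : ℕ) : ((ι →₀ ℕ) → N) →ₗ[R] N :=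
  ∑ d ∈ finsuppAntidiag s t, (∏ i ∈ s, h i ^ d i) • LinearMap.proj d

variable {h : ι → R} {s : Finset ι}

lemma evalForm_apply (t : ℕ) (C : (ι →₀ ℕ) → N) :
    evalForm h s t C = ∑ d ∈ finsuppAntidiag s t, (∏ i ∈ s, h i ^ d i) • C d := by
  simp [evalForm]

lemma evalForm_degree_zero (C : (ι →₀ ℕ) → N) : evalForm h s 0 C = C 0 := by
  simp [evalForm_apply]

lemma evalForm_succ {a : ι} (ha : a ∈ s) (t : ℕ) (C : (ι →₀ ℕ) → N) :
    evalForm h s (t + 1) C =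
      evalForm h (s.erase a) (t + 1) C +
        h a • evalForm h s t (fun e => C (e + Finsupp.single a 1)) := by
  rw [evalForm_apply, sum_finsuppAntidiag_succ ha, evalForm_apply, evalForm_apply, smul_sum]
  congr 1
  · refine sum_congr rfl fun d hd => ?_
    rw [prod_erase s (by rw [(mem_finsuppAntidiag_erase.mp hd).2, pow_zero])]
  · refine sum_congr rfl fun e _ => ?_
    rw [prod_pow_add_single ha, mul_smul]

lemma smul_evalForm {a : ι} (ha : a ∈ s) (t : ℕ) (C : (ι →₀ ℕ) → N) :
    h a • evalForm h s t C =
      evalForm h s (t + 1)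
        (fun d : ι →₀ ℕ => if d a = 0 then 0 else C (d - Finsupp.single a 1)) := by
  rw [evalForm_succ ha, evalForm_apply (s := s.erase a),
    sum_eq_zero fun d hd => by rw [if_pos (mem_finsuppAntidiag_erase.mp hd).2, smul_zero],
    zero_add]
  simp

lemma evalForm_mem_pow_smul {P : Submodule R N} {t : ℕ} {C : (ι →₀ ℕ) → N}
    (hC : ∀ d ∈ finsuppAntidiag s t, C d ∈ P) :
    evalForm h s t C ∈ Ideal.span (h '' s) ^ t • P := by
  rw [evalForm_apply]
  refine Submodule.sum_mem _ fun d hd => Submodule.smul_mem_smul ?_ (hC d hd)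
  rw [← (mem_finsuppAntidiag.mp hd).1]
  exact prod_pow_mem_pow (fun i hi => Ideal.subset_span (Set.mem_image_of_mem h hi)) d

lemma range_evalForm (t : ℕ) :
    LinearMap.range (evalForm h s t : ((ι →₀ ℕ) → N) →ₗ[R] N) =
      Ideal.span (h '' s) ^ t • ⊤ := by
  refine le_antisymm ?_ ?_
  · rintro _ ⟨C, rfl⟩
    exact evalForm_mem_pow_smul fun _ _ => Submodule.mem_top
  induction t with
  | zero =>
    intro x _
    exact ⟨fun _ => x, evalForm_degree_zero _⟩
  | succ t ih =>
    rw [pow_succ', Submodule.mul_smul]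
    refine (Submodule.smul_mono le_rfl ih).trans ?_
    rw [Submodule.span_smul_eq]
    refine Submodule.set_smul_le _ _ _ ?_
    rintro _ _ ⟨a, ha, rfl⟩ ⟨C, rfl⟩
    exact ⟨_, (smul_evalForm ha t C).symm⟩

lemma exists_evalForm_eq {t : ℕ} {x : N}
    (hx : x ∈ Ideal.span (h '' s) ^ t • (⊤ : Submodule R N)) : ∃ C, evalForm h s t C = x := by
  rwa [← range_evalForm, LinearMap.mem_range] at hx

variable (N) in
def IsQuasiRegularOn (h : ι → R) (s : Finset ι) : Prop :=
  ∀ t (C : (ι →₀ ℕ) → N),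
    evalForm h s t C ∈ Ideal.span (h '' s) ^ (t + 1) • (⊤ : Submodule R N) →
      ∀ d ∈ finsuppAntidiag s t, C d ∈ Ideal.span (h '' s) • (⊤ : Submodule R N)

lemma coeff_mem_of_evalForm_degree_zero_mem {C : (ι →₀ ℕ) → N}
    (hC : evalForm h s 0 C ∈ Ideal.span (h '' s) ^ (0 + 1) • (⊤ : Submodule R N)) :
    ∀ d ∈ finsuppAntidiag s 0, C d ∈ Ideal.span (h '' s) • (⊤ : Submodule R N) := by
  rw [evalForm_degree_zero, zero_add, pow_one] at hC
  simpa using hC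

lemma isQuasiRegularOn_empty : IsQuasiRegularOn N h ∅ := by
  intro t C hC d hd
  obtain rfl : t = 0 := by
    by_contra ht
    simp [finsuppAntidiag_empty_of_ne_zero ht] at hd
  exact coeff_mem_of_evalForm_degree_zero_mem hC d hd

end Forms

section QuasiRegular

variable [CommRing R] [AddCommGroup N] [Module R N] {h : ι → R} {s : Finset ι}

lemma IsQuasiRegularOn.mem_pow_smul_of_smul_mem (hq : IsQuasiRegularOn N h s) {z : R}
    (hz : IsSMulRegular (N ⧸ Ideal.span (h '' s) • (⊤ : Submodule R N)) z) (t : ℕ) {b : N}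
    (hb : z • b ∈ Ideal.span (h '' s) ^ t • (⊤ : Submodule R N)) :
    b ∈ Ideal.span (h '' s) ^ t • (⊤ : Submodule R N) := by
  induction t generalizing b with
  | zero => simp
  | succ t ih =>
    have hb' := ih (Submodule.smul_mono_left (Ideal.pow_le_pow_right t.le_succ) hb)
    obtain ⟨C, rfl⟩ := exists_evalForm_eq hb'
    rw [← map_smul] at hb
    have hC := hq t _ hb
    rw [pow_succ, Submodule.mul_smul]
    exact evalForm_mem_pow_smul fun d hd =>
      mem_of_isSMulRegular_quotient_of_smul_mem hz (hC d hd)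

lemma IsQuasiRegularOn.insert_of_isSMulRegular (hq : IsQuasiRegularOn N h s) {a : ι}
    (ha : a ∉ s) (hz : IsSMulRegular (N ⧸ Ideal.span (h '' s) • (⊤ : Submodule R N)) (h a)) :
    IsQuasiRegularOn N h (insert a s) := by
  have hJ : Ideal.span (h '' s) ≤ Ideal.span (h '' ↑(insert a s)) :=
    Ideal.span_mono (Set.image_mono (coe_subset.mpr (subset_insert a s)))
  have hsplit (t : ℕ) (C : (ι →₀ ℕ) → N) :
      evalForm h (insert a s) (t + 1) C = evalForm h s (t + 1) C +
        h a • evalForm h (insert a s) t (fun e => C (e + Finsupp.single a 1)) := by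
    rw [evalForm_succ (mem_insert_self a s), erase_insert ha]
  intro t
  induction t with
  | zero => exact fun C hC => coeff_mem_of_evalForm_degree_zero_mem hC
  | succ t ih =>
    intro C hC
    obtain ⟨G, hG⟩ := exists_evalForm_eq hC
    rw [hsplit (t + 1) G, hsplit t C] at hG
    set x := evalForm h (insert a s) (t + 1) (fun e => G (e + Finsupp.single a 1)) -
      evalForm h (insert a s) t (fun e => C (e + Finsupp.single a 1))
    have hzx : h a • x = evalForm h s (t + 1) C - evalForm h s (t + 1 + 1) G := by
      rw [smul_sub, sub_eq_sub_iff_add_eq_add, add_comm, hG]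
    have hx : x ∈ Ideal.span (h '' s) ^ (t + 1) • (⊤ : Submodule R N) := by
      refine hq.mem_pow_smul_of_smul_mem hz _ (hzx ▸ Submodule.sub_mem _ ?_ ?_)
      · exact evalForm_mem_pow_smul fun _ _ => Submodule.mem_top
      · exact Submodule.smul_mono_left (Ideal.pow_le_pow_right (t + 1).le_succ)
          (evalForm_mem_pow_smul fun _ _ => Submodule.mem_top)
    obtain ⟨K, hK⟩ := exists_evalForm_eq hx
    have hC₀ := hq (t + 1) (C - h a • K) <| by
      rw [map_sub, map_smul, hK, hzx, sub_sub_cancel]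
      exact evalForm_mem_pow_smul fun _ _ => Submodule.mem_top
    have hC₁ := ih (fun e => C (e + Finsupp.single a 1)) <| by
      rw [← sub_sub_cancel (evalForm h (insert a s) (t + 1) fun e => G (e + Finsupp.single a 1))
        (evalForm h (insert a s) t fun e => C (e + Finsupp.single a 1))]
      exact Submodule.sub_mem _ (evalForm_mem_pow_smul fun _ _ => Submodule.mem_top)
        (Submodule.smul_mono_left (Ideal.pow_right_mono hJ _) hx)
    refine forall_mem_finsuppAntidiag_succ (fun d hd => ?_) hC₁
    rw [erase_insert ha] at hd
    rw [← sub_add_cancel (C d) (h a • K d)]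
    exact Submodule.add_mem _ (Submodule.smul_mono_left hJ (hC₀ d hd))
      (Submodule.smul_mem_smul (Ideal.subset_span (Set.mem_image_of_mem h (mem_insert_self a s)))
        Submodule.mem_top)

theorem RingTheory.Sequence.IsWeaklyRegular.isQuasiRegularOn {l : List ι}
    (hreg : IsWeaklyRegular N (l.map h)) (hl : l.Nodup) : IsQuasiRegularOn N h l.toFinset := by
  induction l using List.reverseRecOn with
  | nil => simpa using isQuasiRegularOn_empty
  | append_singleton l a ih =>
    rw [List.map_append, isWeaklyRegular_append_iff, List.map_singleton,
      isWeaklyRegular_singleton_iff] at hreg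
    rw [List.nodup_append] at hl
    have hofList : Ideal.ofList (l.map h) = Ideal.span (h '' l.toFinset) := by
      simp [Ideal.ofList, Set.image]
    have hu : (l ++ [a]).toFinset = insert a l.toFinset := by
      ext
      simp
    rw [hu]
    exact (ih hreg.1 hl.1).insert_of_isSMulRegular
      (fun hal => hl.2.2 a (List.mem_toFinset.mp hal) a (List.mem_singleton_self a) rfl)
      (hofList ▸ hreg.2)

end QuasiRegular

/-- **Rees's theorem.** Let `N` be an `R`-module, `h₁, …, h_k` an `N`-regular sequence
in `R`, and `J = ⟨h₁, …, h_k⟩`. If `F` is a homogeneous polynomial of degree `r` in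
indeterminates `y₁, …, y_k` with coefficients in `N` (encoded as a finitely supported
family of coefficients indexed by exponent vectors of total degree `r`) and
`F(h₁, …, h_k) ∈ J^{r+1}·N`, then all coefficients of `F` lie in `J·N`. -/
theorem rees_theorem {R N : Type} [CommRing R] [AddCommGroup N] [Module R N]
    {k : ℕ} (h : Fin k → R)
    (hreg : RingTheory.Sequence.IsRegular N (List.ofFn h))
    (J : Ideal R) (hJ : J = Ideal.span (Set.range h))
    (r : ℕ) (F : (Fin k →₀ ℕ) →₀ N)
    (hhom : ∀ d ∈ F.support, (d.sum fun _ e => e) = r)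
    (hF : (F.sum fun d c => (∏ i, h i ^ d i) • c) ∈ J ^ (r + 1) • (⊤ : Submodule R N)) :
    ∀ d, F d ∈ J • (⊤ : Submodule R N) := by
  subst hJ
  have hreg' : RingTheory.Sequence.IsWeaklyRegular N ((List.finRange k).map h) :=
    List.ofFn_eq_map ▸ hreg.toIsWeaklyRegular
  have hq : IsQuasiRegularOn N h univ := by
    simpa using hreg'.isQuasiRegularOn (List.nodup_finRange k)
  have hsupp : ∀ d ∈ F.support, d ∈ finsuppAntidiag univ r := fun d hd => by
    simp [← hhom d hd, Finsupp.sum_fintype]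
  have heval : (F.sum fun d c => (∏ i, h i ^ d i) • c) = evalForm h univ r F := by
    rw [evalForm_apply, Finsupp.sum]
    exact sum_subset hsupp fun d _ hd => by simp [Finsupp.notMem_support_iff.mp hd]
  intro d
  by_cases hd : d ∈ F.support
  · simpa using hq r F (heval ▸ by simpa using hF) d (hsupp d hd)
  · simp [Finsupp.notMem_support_iff.mp hd]
end

section
/- Let $S = K[x_1, \ldots, x_{n+1}]$, $I_2(N)$ the ideal of $2\times 2$ minors of the matrix with rows $(x_1,\ldots,x_n)$ and $(x_2,\ldots,x_{n+1})$, and $a, b, c \geq 1$ natural numbers. If $\mathfrak{p}$ is a prime ideal of $S$ containing $I_2(N) + \langle x_1^a + x_{n+1}^b, x_n^c \rangle$, then $\mathfrak{p} = \langle x_1, \ldots, x_{n+1} \rangle$. -/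
open MvPolynomial

lemma mem_span_range_X_of_constantCoeff_eq_zero {σ R : Type*} [CommRing R]
    {f : MvPolynomial σ R} (h : constantCoeff f = 0) :
    f ∈ Ideal.span (Set.range (X : σ → MvPolynomial σ R)) := by
  rw [← Set.image_univ, mem_ideal_span_X_image]
  intro m hm
  have hm0 : m ≠ 0 := by
    intro h0
    apply mem_support_iff.mp hm
    rw [h0, ← constantCoeff_eq, h]
  obtain ⟨i, hi⟩ := Finsupp.ne_iff.mp hm0
  exact ⟨i, Set.mem_univ i, by simpa using hi⟩

/-- For `a, b, c ≥ 1`, any prime ideal of `S = K[x₁, …, x_{n+1}]` containing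
`I₂(N) + ⟨x₁^a + x_{n+1}^b, xₙ^c⟩` equals the irrelevant maximal ideal
`⟨x₁, …, x_{n+1}⟩`. -/
theorem prime_containing_is_irrelevant {K : Type} [Field K] (n : ℕ) (hn : 1 ≤ n)
    (a b c : ℕ) (ha : 1 ≤ a) (hb : 1 ≤ b) (hc : 1 ≤ c)
    (I2 : Ideal (MvPolynomial (Fin (n + 1)) K))
    (hI2 : I2 = Ideal.span {f | ∃ i j : Fin n,
      f = X i.castSucc * X j.succ - X i.succ * X j.castSucc})
    (P : Ideal (MvPolynomial (Fin (n + 1)) K)) (hP : P.IsPrime)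
    (hsub : I2 + Ideal.span {X 0 ^ a + X (Fin.last n) ^ b,
      X (⟨n - 1, by omega⟩ : Fin (n + 1)) ^ c} ≤ P) :
    P = Ideal.span (Set.range (X : Fin (n + 1) → MvPolynomial (Fin (n + 1)) K)) := by
  have hI2P : I2 ≤ P := le_trans le_sup_left hsub
  have hgenP : Ideal.span {X 0 ^ a + X (Fin.last n) ^ b,
      X (⟨n - 1, by omega⟩ : Fin (n + 1)) ^ c} ≤ P := le_trans le_sup_right hsub
  have hminor : ∀ i j : Fin n,
      X i.castSucc * X j.succ - X i.succ * X j.castSucc ∈ P := by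
    intro i j
    exact hI2P (hI2 ▸ Ideal.subset_span ⟨i, j, rfl⟩)
  have h1 : X (0 : Fin (n+1)) ^ a + X (Fin.last n) ^ b ∈ P :=
    hgenP (Ideal.subset_span (Or.inl rfl))
  have h2 : X (⟨n - 1, by omega⟩ : Fin (n + 1)) ^ c ∈ P :=
    hgenP (Ideal.subset_span (Or.inr rfl))
  have hXn1 : X (⟨n - 1, by omega⟩ : Fin (n + 1)) ∈ P := hP.mem_of_pow_mem c h2
  -- descending induction: all X_k for 1 ≤ k ≤ n-1 are in P
  have key : ∀ d k : ℕ, k + d = n - 1 → 1 ≤ k → ∀ h : k < n + 1,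
      X (⟨k, h⟩ : Fin (n + 1)) ∈ P := by
    intro d
    induction d with
    | zero =>
      intro k hk hk1 h
      have : k = n - 1 := by omega
      subst this
      exact hXn1
    | succ d ih =>
      intro k hk hk1 h
      have hk1P : X (⟨k + 1, by omega⟩ : Fin (n + 1)) ∈ P :=
        ih (k + 1) (by omega) (by omega) (by omega)
      set i : Fin n := ⟨k, by omega⟩ with hi
      set j : Fin n := ⟨k - 1, by omega⟩ with hj
      have hm := hminor i j
      have hsuccP : X i.succ ∈ P := by
        have e3 : i.succ = (⟨k + 1, by omega⟩ : Fin (n + 1)) := by rw [hi]; ext; simp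
        rw [e3]; exact hk1P
      have hsq : X i.castSucc * X j.succ ∈ P := by
        have := P.add_mem hm (P.mul_mem_right (X j.castSucc) hsuccP)
        simpa using this
      have e1 : i.castSucc = (⟨k, h⟩ : Fin (n + 1)) := by rw [hi]; ext; simp
      have e2 : j.succ = (⟨k, h⟩ : Fin (n + 1)) := by rw [hj]; ext; simp; omega
      rcases hP.mem_or_mem hsq with hx | hx
      · rw [e1] at hx; exact hx
      · rw [e2] at hx; exact hx
  -- the endpoints
  have hends : X (0 : Fin (n + 1)) ∈ P ∧ X (Fin.last n) ∈ P := by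
    rcases eq_or_lt_of_le hn with h | h
    · -- n = 1
      have h0 : X (0 : Fin (n + 1)) ∈ P := by
        convert hXn1 using 2
        ext; simp; omega
      have hlb : X (Fin.last n) ^ b ∈ P := by
        have := P.sub_mem h1 (P.pow_mem_of_mem h0 a ha)
        simpa using this
      exact ⟨h0, hP.mem_of_pow_mem b hlb⟩
    · -- n ≥ 2
      have hX1 : X (⟨1, by omega⟩ : Fin (n + 1)) ∈ P := key (n - 2) 1 (by omega) le_rfl (by omega)
      set i : Fin n := ⟨0, by omega⟩ with hi
      set j : Fin n := ⟨n - 1, by omega⟩ with hj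
      have hm := hminor i j
      have hsuccP : X i.succ ∈ P := by
        have e3 : i.succ = (⟨1, by omega⟩ : Fin (n + 1)) := by rw [hi]; ext; simp
        rw [e3]; exact hX1
      have hsq : X i.castSucc * X j.succ ∈ P := by
        have := P.add_mem hm (P.mul_mem_right (X j.castSucc) hsuccP)
        simpa using this
      have e1 : i.castSucc = (0 : Fin (n + 1)) := by rw [hi]; ext; simp
      have e2 : j.succ = Fin.last n := by rw [hj]; ext; simp; omega
      rw [e1, e2] at hsq
      have hprod : X (0 : Fin (n + 1)) * X (Fin.last n) ∈ P := hsq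
      rcases hP.mem_or_mem hprod with h0 | hl
      · refine ⟨h0, hP.mem_of_pow_mem b ?_⟩
        have := P.sub_mem h1 (P.pow_mem_of_mem h0 a ha)
        simpa using this
      · refine ⟨hP.mem_of_pow_mem a ?_, hl⟩
        have := P.sub_mem h1 (P.pow_mem_of_mem hl b hb)
        simpa using this
  -- every variable is in P
  have hall : ∀ k : Fin (n + 1), X k ∈ P := by
    intro k
    rcases eq_or_ne k.val 0 with h0 | h0
    · have : k = 0 := by ext; simpa using h0
      rw [this]; exact hends.1
    rcases eq_or_ne k.val n with hln | hln
    · have : k = Fin.last n := by ext; simpa using hln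
      rw [this]; exact hends.2
    · have : X (⟨k.val, by omega⟩ : Fin (n + 1)) ∈ P :=
        key (n - 1 - k.val) k.val (by omega) (by omega) (by omega)
      simpa using this
  have hspanP : Ideal.span (Set.range (X : Fin (n + 1) → MvPolynomial (Fin (n + 1)) K)) ≤ P := by
    rw [Ideal.span_le]
    rintro _ ⟨k, rfl⟩
    exact hall k
  refine le_antisymm ?_ hspanP
  intro f hf
  have hc0 : constantCoeff f = 0 := by
    by_contra hc
    have hg : f - C (constantCoeff f) ∈ P := by
      apply hspanP
      apply mem_span_range_X_of_constantCoeff_eq_zero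
      simp
    have hCmem : (C (constantCoeff f) : MvPolynomial (Fin (n + 1)) K) ∈ P := by
      have := P.sub_mem hf hg
      simpa using this
    have hu : IsUnit (C (constantCoeff f) : MvPolynomial (Fin (n + 1)) K) :=
      (isUnit_iff_ne_zero.mpr hc).map C
    exact hP.ne_top (P.eq_top_of_isUnit_mem hCmem hu)
  exact mem_span_range_X_of_constantCoeff_eq_zero hc0
end

section
/- Let $R$ be a commutative ring, $I$ an ideal, and $g_1, g_2 \in R$ such that the images of $g_1, g_2$ form a regular sequence on $R/I$. If $\alpha \in I \cap \langle g_1, g_2 \rangle$, then $\alpha \in I \cdot \langle g_1, g_2 \rangle$. -/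
/-- If the images of `g₁, g₂` form a regular sequence on `R/I` (`g₁` is a non-zerodivisor
mod `I`, and `g₂` is a non-zerodivisor mod `I + ⟨g₁⟩`), then every
`α ∈ I ∩ ⟨g₁, g₂⟩` lies in `I·⟨g₁, g₂⟩`. -/
theorem mem_mul_of_mem_inf_span_pair {R : Type} [CommRing R] (I : Ideal R) (g₁ g₂ : R)
    (h1 : ∀ p : R, g₁ * p ∈ I → p ∈ I)
    (h2 : ∀ p : R, g₂ * p ∈ I + Ideal.span {g₁} → p ∈ I + Ideal.span {g₁}) :
    ∀ α ∈ I ⊓ Ideal.span {g₁, g₂}, α ∈ I * Ideal.span {g₁, g₂} := by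
  intro α hα
  have hI : α ∈ I := hα.1
  obtain ⟨a, b, hab⟩ := Ideal.mem_span_pair.mp hα.2
  -- g₂ * b ∈ I + ⟨g₁⟩ since b * g₂ = α - a * g₁
  have hb : b ∈ I + Ideal.span {g₁} := by
    apply h2
    have : g₂ * b = α - a * g₁ := by linear_combination hab
    rw [this]
    exact Submodule.sub_mem _ (Ideal.mem_sup_left hI)
      (Ideal.mem_sup_right (Ideal.mem_span_singleton.mpr ⟨a, mul_comm a g₁⟩))
  rw [Submodule.add_eq_sup, Submodule.mem_sup] at hb
  obtain ⟨i, hi, y, hy, hiy⟩ := hb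
  rw [Ideal.mem_span_singleton'] at hy
  obtain ⟨c, hc⟩ := hy
  -- α = (a + c * g₂) * g₁ + i * g₂
  have key : α = (a + c * g₂) * g₁ + i * g₂ := by
    rw [← hab, ← hiy, ← hc]; ring
  have hac : a + c * g₂ ∈ I := by
    apply h1
    have : g₁ * (a + c * g₂) = α - i * g₂ := by rw [key]; ring
    rw [this]
    exact Submodule.sub_mem _ hI (I.mul_mem_right _ hi)
  rw [key]
  have hg₁ : g₁ ∈ Ideal.span {g₁, g₂} :=
    Ideal.subset_span (Set.mem_insert _ _)
  have hg₂ : g₂ ∈ Ideal.span {g₁, g₂} :=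
    Ideal.subset_span (Set.mem_insert_of_mem _ rfl)
  exact Submodule.add_mem _ (Ideal.mul_mem_mul hac hg₁) (Ideal.mul_mem_mul hi hg₂)
end
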